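/- For even n ≥ 2, the map φ sending γ_0 + Σ_{i=1}^{n-1} a_i γ_{2i} to the class [1 + Σ_{i=1}^{n-1} a_i X^i] in 𝔽₂[X]/(Xⁿ + X^{n/2}) is a monoid isomorphism from (G_n, ∘) onto the submonoid M_n = {[1 + Σ a_i X^i]} of 𝔽₂[X]/(Xⁿ + X^{n/2}); in particular φ(f ∘ g) = φ(f)·φ(g). -/

import Mathlib

/-!
Read a word `x ∈ 𝔽₂ⁿ` cyclically from position `i` as a sequence `u`; then
`γ_{2k}(x)_i = u(2k) ∏_{j<k} (1 + u(2j+1))`. Since `z (1 + z) = 0` in `𝔽₂` and `b₀ = 1`,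
`γ_{2l} ∘ (Σ_k b_k γ_{2k}) = Σ_k b_k γ_{2(l+k)}`: composing adds indices, as multiplying monomials
adds exponents. For `n = 2h` the sequence `r ↦ γ_{2r}(x)_i` satisfies `γ_{2(r+h)} = γ_{2r}` for
`r ≥ h`, which is exactly the relation `X^{r+h} = X^r` (`r ≥ h`) of `𝔽₂[X]/(Xⁿ + X^h)`. So the
linear functional `X^r ↦ γ_{2r}(x)_i` factors through the quotient; it sends `φ(a)` to
`(Σ a_k γ_{2k})(x)_i` and `φ(a) φ(b)` to the composite. Injectivity comes from evaluating on
words with one or two nonzero letters.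
-/

open Finset Polynomial

/-- The cyclic left shift on `𝔽₂ⁿ`. -/
def cshift (n : ℕ) (x : Fin n → ZMod 2) : Fin n → ZMod 2 :=
  fun i => x ⟨(i.val + 1) % n, Nat.mod_lt _ (Nat.lt_of_le_of_lt (Nat.zero_le i.val) i.isLt)⟩

/-- `gamma n k` is the function `γ_{2k} = S^{2k} ⊙ (𝟙+S^{2k-1}) ⊙ … ⊙ (𝟙+S)` on `𝔽₂ⁿ`;
`gamma n 0 = id`. -/
def gamma (n k : ℕ) (x : Fin n → ZMod 2) : Fin n → ZMod 2 :=
  fun i => (cshift n)^[2 * k] x i * ∏ j ∈ Finset.range k, (1 + (cshift n)^[2 * j + 1] x i)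

/-- The linear combination of γ functions with coefficient vector a (on 𝔽₂ⁿ). -/
def gammaFun (n : ℕ) (a : ℕ → ZMod 2) : (Fin n → ZMod 2) → Fin n → ZMod 2 :=
  fun x => ∑ i ∈ Finset.range n, a i • gamma n i x

/-- The class of 1 + Σ a_i X^i in 𝔽₂[X]/(Xⁿ + X^{n/2}) attached to a coefficient
vector a with a 0 = 1. -/
noncomputable def phiMap (n : ℕ) (a : ℕ → ZMod 2) :
    Polynomial (ZMod 2) ⧸ Ideal.span {(X : Polynomial (ZMod 2)) ^ n + X ^ (n / 2)} :=
  Ideal.Quotient.mk _ (∑ i ∈ Finset.range n, Polynomial.C (a i) * X ^ i)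

lemma zmod2_mul_self (z : ZMod 2) : z * z = z := by
  fin_cases z <;> rfl

lemma zmod2_mul_one_add_self (z : ZMod 2) : z * (1 + z) = 0 := by
  fin_cases z <;> rfl

lemma mul_prod_one_add_eq_zero {ι : Type*} {s : Finset ι} {f : ι → ZMod 2} {j : ι} {z : ZMod 2}
    (hj : j ∈ s) (hz : f j = z) : z * ∏ i ∈ s, (1 + f i) = 0 := by
  obtain ⟨c, hc⟩ := dvd_prod_of_mem (fun i => 1 + f i) hj
  rw [hc, ← hz, ← mul_assoc, zmod2_mul_one_add_self, zero_mul]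

/-- `γ_{2k}` read along a sequence: `gamma n k x i = gammaSeq (cshiftSeq x i) k`. -/
def gammaSeq (u : ℕ → ZMod 2) (k : ℕ) : ZMod 2 :=
  u (2 * k) * ∏ j ∈ range k, (1 + u (2 * j + 1))

section gammaSeq

lemma gammaSeq_zero (u : ℕ → ZMod 2) : gammaSeq u 0 = u 0 := by
  simp [gammaSeq]

lemma gammaSeq_shift_two_mul (u : ℕ → ZMod 2) (l k : ℕ) :
    gammaSeq (fun t => u (t + 2 * l)) k
      = u (2 * (l + k)) * ∏ j ∈ Ico l (l + k), (1 + u (2 * j + 1)) := by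
  rw [gammaSeq, prod_Ico_eq_prod_range, Nat.add_sub_cancel_left]
  congr 1
  · ring_nf
  · exact prod_congr rfl fun j _ => by ring_nf

lemma gammaSeq_shift_odd_mul_eq_zero (u : ℕ → ZMod 2) {k l r : ℕ} (hk : 0 < k) (hlr : l < r) :
    gammaSeq (fun t => u (t + (2 * l + 1))) k
      * (u (2 * r) * ∏ j ∈ Ico (l + 1) r, (1 + u (2 * j + 1))) = 0 := by
  rw [gammaSeq]
  -- Either the leading letter `u (2(l+k)+1)` meets its complement in the right-hand product,
  -- or the left-hand product contains the complement `1 + u (2r)` of the letter `u (2r)`.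
  rcases lt_or_ge (l + k) r with hkr | hrk
  · have hz := mul_prod_one_add_eq_zero (f := fun j => u (2 * j + 1)) (z := u (2 * k + (2 * l + 1)))
      (mem_Ico.2 ⟨by omega, hkr⟩ : l + k ∈ Ico (l + 1) r) (by congr 1; ring)
    linear_combination (u (2 * r) * ∏ i ∈ range k, (1 + u (2 * i + 1 + (2 * l + 1)))) * hz
  · have hz := mul_prod_one_add_eq_zero (f := fun i => u (2 * i + 1 + (2 * l + 1))) (z := u (2 * r))
      (mem_range.2 (by omega : r - l - 1 < k)) (by congr 1; omega)
    linear_combination (u (2 * k + (2 * l + 1)) * ∏ j ∈ Ico (l + 1) r, (1 + u (2 * j + 1))) * hz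

variable {u v b : ℕ → ZMod 2} {s : Finset ℕ} (hs : 0 ∈ s) (hb : b 0 = 1)
  (hv : ∀ m, v m = ∑ k ∈ s, b k * gammaSeq (fun t => u (t + m)) k)
include hs hb hv

lemma prod_one_add_mul_eq_gammaSeq {l r : ℕ} (hlr : l ≤ r) :
    (∏ j ∈ range l, (1 + v (2 * j + 1))) * (u (2 * r) * ∏ j ∈ Ico l r, (1 + u (2 * j + 1)))
      = gammaSeq u r := by
  induction l with
  | zero => rw [range_zero, prod_empty, one_mul, gammaSeq, range_eq_Ico]
  | succ l ih =>
    have hodd : v (2 * l + 1) * (u (2 * r) * ∏ j ∈ Ico (l + 1) r, (1 + u (2 * j + 1)))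
        = u (2 * l + 1) * (u (2 * r) * ∏ j ∈ Ico (l + 1) r, (1 + u (2 * j + 1))) := by
      rw [hv, sum_mul, sum_eq_single_of_mem 0 hs fun k _ hk => by
        rw [mul_assoc, gammaSeq_shift_odd_mul_eq_zero u (Nat.pos_of_ne_zero hk) (by omega),
          mul_zero]]
      rw [hb, gammaSeq_zero, one_mul, zero_add]
    rw [← ih (by omega), prod_range_succ, prod_eq_prod_Ico_succ_bot (by omega : l < r)]
    linear_combination (∏ j ∈ range l, (1 + v (2 * j + 1))) * hodd

lemma gammaSeq_eq_sum (l : ℕ) : gammaSeq v l = ∑ k ∈ s, b k * gammaSeq u (l + k) := by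
  rw [gammaSeq.eq_1 v l, hv, sum_mul]
  refine sum_congr rfl fun k _ => ?_
  rw [gammaSeq_shift_two_mul, ← prod_one_add_mul_eq_gammaSeq hs hb hv (Nat.le_add_right l k)]
  ring

end gammaSeq

section periodic

variable {h : ℕ} {u : ℕ → ZMod 2} (hu : Function.Periodic u (2 * h))
include hu

lemma gammaSeq_add_of_periodic (k : ℕ) :
    gammaSeq u (h + k) = gammaSeq u k * ∏ j ∈ range h, (1 + u (2 * j + 1)) := by
  have hodd : ∀ j, u (2 * (h + j) + 1) = u (2 * j + 1) := fun j => by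
    rw [← hu (2 * j + 1)]; ring_nf
  rw [gammaSeq, gammaSeq, prod_range_add, show 2 * (h + k) = 2 * k + 2 * h by ring, hu]
  simp only [hodd]
  ring

lemma gammaSeq_add_of_le {r : ℕ} (hr : h ≤ r) : gammaSeq u (r + h) = gammaSeq u r := by
  obtain ⟨m, rfl⟩ := Nat.exists_eq_add_of_le hr
  rw [add_comm (h + m) h, gammaSeq_add_of_periodic hu, gammaSeq_add_of_periodic hu, mul_assoc,
    zmod2_mul_self]

lemma sum_gammaSeq_of_eq_ite {k₀ : ℕ} (hk₀ : k₀ < h)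
    (heven : ∀ k < h, u (2 * k) = if k = k₀ then 1 else 0) (hodd : ∀ j < k₀, u (2 * j + 1) = 0)
    (a : ℕ → ZMod 2) :
    ∑ k ∈ range (2 * h), a k * gammaSeq u k
      = a k₀ + a (h + k₀) * ∏ j ∈ range h, (1 + u (2 * j + 1)) := by
  have hlow : ∀ k < h, gammaSeq u k = if k = k₀ then 1 else 0 := fun k hk => by
    rw [gammaSeq, heven k hk]
    split_ifs with hkk
    · subst hkk
      rw [one_mul]
      exact prod_eq_one fun j hj => by rw [hodd j (mem_range.1 hj), add_zero]
    · rw [zero_mul]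
  rw [two_mul, sum_range_add, ← sum_add_distrib,
    sum_congr rfl fun k hk => by rw [gammaSeq_add_of_periodic hu, hlow k (mem_range.1 hk)],
    sum_eq_single_of_mem k₀ (mem_range.2 hk₀) fun k _ hk => by simp [hk]]
  simp

end periodic

/-- The test word with a single `1` at position `2k₀` picks out `a k₀ + a (h + k₀)`; a second `1`
at position `2k₀ + 1` kills the factor shared by all `γ_{2k}` with `k ≥ h`, leaving `a k₀`. -/
lemma eq_of_sum_gammaSeq_eq {h : ℕ} {a b : ℕ → ZMod 2}
    (hab : ∀ u : ℕ → ZMod 2, Function.Periodic u (2 * h) →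
      ∑ k ∈ range (2 * h), a k * gammaSeq u k = ∑ k ∈ range (2 * h), b k * gammaSeq u k) :
    ∀ k < 2 * h, a k = b k := by
  have key : ∀ k₀ < h, a k₀ = b k₀ ∧ a (h + k₀) = b (h + k₀) := by
    intro k₀ hk₀
    have hmod : ∀ m < 2 * h, m % (2 * h) = m := fun m hm => Nat.mod_eq_of_lt hm
    let u₀ : ℕ → ZMod 2 := fun t => if t % (2 * h) = 2 * k₀ then 1 else 0
    let u₁ : ℕ → ZMod 2 := fun t => if t % (2 * h) / 2 = k₀ then 1 else 0
    have hu₀ : Function.Periodic u₀ (2 * h) := fun t => by simp [u₀]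
    have hu₁ : Function.Periodic u₁ (2 * h) := fun t => by simp [u₁]
    have e₀ : ∀ c : ℕ → ZMod 2, ∑ k ∈ range (2 * h), c k * gammaSeq u₀ k = c k₀ + c (h + k₀) :=
      fun c => by
        rw [sum_gammaSeq_of_eq_ite hu₀ hk₀ (fun k hk => by simp [u₀, hmod (2 * k) (by omega)])
            (fun j hj => by simp only [u₀, hmod (2 * j + 1) (by omega)]; rw [if_neg (by omega)]),
          prod_eq_one fun j hj => by
            simp only [u₀, hmod (2 * j + 1) (by have := mem_range.1 hj; omega)]
            rw [if_neg (by omega), add_zero], mul_one]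
    have e₁ : ∀ c : ℕ → ZMod 2, ∑ k ∈ range (2 * h), c k * gammaSeq u₁ k = c k₀ :=
      fun c => by
        rw [sum_gammaSeq_of_eq_ite hu₁ hk₀ (fun k hk => by simp [u₁, hmod (2 * k) (by omega)])
            (fun j hj => by simp only [u₁, hmod (2 * j + 1) (by omega)]; rw [if_neg (by omega)]),
          prod_eq_zero (mem_range.2 hk₀) (by
            simp only [u₁, hmod (2 * k₀ + 1) (by omega)]
            rw [if_pos (by omega)]; rfl), mul_zero, add_zero]
    have h₀ := hab u₀ hu₀
    have h₁ := hab u₁ hu₁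
    rw [e₀, e₀] at h₀
    rw [e₁, e₁] at h₁
    exact ⟨h₁, by rw [h₁] at h₀; exact add_left_cancel h₀⟩
  intro k hk
  rcases lt_or_ge k h with hkh | hkh
  · exact (key k hkh).1
  · obtain ⟨m, rfl⟩ := Nat.exists_eq_add_of_le hkh
    exact (key m (by omega)).2

section seqEval

variable {R : Type*}

noncomputable def truncPoly [Semiring R] (n : ℕ) (a : ℕ → R) : R[X] :=
  ∑ i ∈ range n, C (a i) * X ^ i

lemma coeff_truncPoly_zero [Semiring R] {n : ℕ} (hn : 0 < n) (a : ℕ → R) :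
    (truncPoly n a).coeff 0 = a 0 := by
  simp [truncPoly, hn]

lemma truncPoly_coeff [Semiring R] {n : ℕ} {p : R[X]} (hp : p.natDegree < n) :
    truncPoly n p.coeff = p := by
  conv_rhs => rw [as_sum_range' p n hp]
  simp only [truncPoly, C_mul_X_pow_eq_monomial]

/-- The linear functional `X ^ r ↦ g r`. -/
noncomputable def seqEval [CommSemiring R] (g : ℕ → R) : R[X] →ₗ[R] R :=
  lsum fun r => LinearMap.mulRight R (g r)

lemma seqEval_monomial [CommSemiring R] (g : ℕ → R) (r : ℕ) (c : R) :
    seqEval g (monomial r c) = c * g r := by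
  rw [seqEval, lsum_apply, sum_monomial_index _ _ (by simp)]
  rfl

lemma seqEval_truncPoly [CommSemiring R] (g : ℕ → R) (n : ℕ) (a : ℕ → R) :
    seqEval g (truncPoly n a) = ∑ k ∈ range n, a k * g k := by
  simp only [truncPoly, map_sum, C_mul_X_pow_eq_monomial, seqEval_monomial]

lemma seqEval_truncPoly_mul [CommSemiring R] (g : ℕ → R) (n : ℕ) (a b : ℕ → R) :
    seqEval g (truncPoly n a * truncPoly n b)
      = ∑ l ∈ range n, ∑ k ∈ range n, a l * b k * g (l + k) := by
  simp only [truncPoly, sum_mul_sum, map_sum]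
  refine sum_congr rfl fun l _ => sum_congr rfl fun k _ => ?_
  rw [mul_mul_mul_comm, ← C_mul, ← pow_add, C_mul_X_pow_eq_monomial, seqEval_monomial]

lemma seqEval_mul_X_pow_add_X_pow [CommRing R] [CharP R 2] {g : ℕ → R} {h : ℕ}
    (hg : ∀ r, h ≤ r → g (r + h) = g r) (D : R[X]) :
    seqEval g (D * (X ^ (2 * h) + X ^ h)) = 0 := by
  induction D using Polynomial.induction_on' with
  | add p q hp hq => rw [add_mul, map_add, hp, hq, add_zero]
  | monomial r c =>
    rw [mul_add, monomial_mul_X_pow, monomial_mul_X_pow, map_add, seqEval_monomial,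
      seqEval_monomial, two_mul, ← add_assoc, hg _ (Nat.le_add_left h r), CharTwo.add_self_eq_zero]

end seqEval

section cshift

variable {n : ℕ}

lemma cshift_iterate_apply (m : ℕ) (x : Fin n → ZMod 2) (i : Fin n) :
    (cshift n)^[m] x i = x ⟨(i + m) % n, Nat.mod_lt _ i.pos⟩ := by
  induction m generalizing x with
  | zero => simp [Nat.mod_eq_of_lt i.isLt]
  | succ m ih =>
    rw [Function.iterate_succ_apply, ih, cshift]
    congr 2
    rw [Nat.mod_add_mod]
    congr 1

lemma cshift_iterate_self (x : Fin n → ZMod 2) : (cshift n)^[n] x = x := by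
  funext i
  rw [cshift_iterate_apply]
  congr 1
  ext
  simp [Nat.mod_eq_of_lt i.isLt]

lemma gamma_cshift (k : ℕ) (x : Fin n → ZMod 2) :
    gamma n k (cshift n x) = cshift n (gamma n k x) := by
  funext i
  simp only [gamma, (Function.Commute.iterate_self (cshift n) _).eq]
  rfl

lemma gammaFun_cshift (a : ℕ → ZMod 2) (x : Fin n → ZMod 2) :
    gammaFun n a (cshift n x) = cshift n (gammaFun n a x) := by
  funext i
  simp only [gammaFun, gamma_cshift, cshift, Finset.sum_apply, Pi.smul_apply]

def cshiftSeq (x : Fin n → ZMod 2) (i : Fin n) (t : ℕ) : ZMod 2 := (cshift n)^[t] x i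

lemma periodic_cshiftSeq (x : Fin n → ZMod 2) (i : Fin n) : Function.Periodic (cshiftSeq x i) n :=
  fun t => by rw [cshiftSeq, Function.iterate_add_apply, cshift_iterate_self, cshiftSeq]

lemma cshiftSeq_of_periodic (hn : 0 < n) {u : ℕ → ZMod 2} (hu : Function.Periodic u n) :
    cshiftSeq (fun j : Fin n => u j) ⟨0, hn⟩ = u := by
  funext t
  rw [cshiftSeq, cshift_iterate_apply, zero_add, hu.map_mod_nat]

lemma gammaFun_apply_eq_sum (a : ℕ → ZMod 2) (x : Fin n → ZMod 2) (i : Fin n) :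
    gammaFun n a x i = ∑ k ∈ range n, a k * gammaSeq (cshiftSeq x i) k := by
  simp only [gammaFun, Finset.sum_apply, Pi.smul_apply, smul_eq_mul]
  rfl

lemma cshiftSeq_gammaFun (b : ℕ → ZMod 2) (x : Fin n → ZMod 2) (i : Fin n) (m : ℕ) :
    cshiftSeq (gammaFun n b x) i m
      = ∑ k ∈ range n, b k * gammaSeq (fun t => cshiftSeq x i (t + m)) k := by
  rw [cshiftSeq, ← (Function.Commute.iterate_right (gammaFun_cshift b) m).eq x,
    gammaFun_apply_eq_sum]
  simp only [cshiftSeq, Function.iterate_add_apply]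
  rfl

lemma gammaFun_gammaFun_apply (hn : 0 < n) {a b : ℕ → ZMod 2} (hb : b 0 = 1)
    (x : Fin n → ZMod 2) (i : Fin n) :
    gammaFun n a (gammaFun n b x) i
      = seqEval (gammaSeq (cshiftSeq x i)) (truncPoly n a * truncPoly n b) := by
  rw [gammaFun_apply_eq_sum, seqEval_truncPoly_mul]
  refine sum_congr rfl fun l _ => ?_
  rw [gammaSeq_eq_sum (mem_range.2 hn) hb (cshiftSeq_gammaFun b x i), mul_sum]
  simp only [mul_assoc]

lemma eq_of_gammaFun_eq (hn : Even n) {a b : ℕ → ZMod 2} (hab : gammaFun n a = gammaFun n b) :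
    ∀ k < n, a k = b k := by
  obtain ⟨h, rfl⟩ := hn.two_dvd
  intro k hk
  refine eq_of_sum_gammaSeq_eq (fun u hu => ?_) k hk
  have := congr_fun (congr_fun hab fun j => u j) ⟨0, by omega⟩
  rwa [gammaFun_apply_eq_sum, gammaFun_apply_eq_sum, cshiftSeq_of_periodic _ hu] at this

end cshift

lemma gammaFun_apply_eq_seqEval {n : ℕ} (a : ℕ → ZMod 2) (x : Fin n → ZMod 2) (i : Fin n) :
    gammaFun n a x i = seqEval (gammaSeq (cshiftSeq x i)) (truncPoly n a) := by
  rw [gammaFun_apply_eq_sum, seqEval_truncPoly]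

lemma seqEval_gammaSeq_eq_of_mk_eq {n : ℕ} (hn : Even n) (x : Fin n → ZMod 2) (i : Fin n)
    {P Q : (ZMod 2)[X]}
    (hPQ : Ideal.Quotient.mk (Ideal.span {X ^ n + X ^ (n / 2)}) P = Ideal.Quotient.mk _ Q) :
    seqEval (gammaSeq (cshiftSeq x i)) P = seqEval (gammaSeq (cshiftSeq x i)) Q := by
  obtain ⟨h, rfl⟩ := hn.two_dvd
  obtain ⟨D, hD⟩ := Ideal.mem_span_singleton'.1 (Ideal.Quotient.eq.1 hPQ)
  rw [Nat.mul_div_cancel_left h two_pos] at hD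
  rw [← sub_eq_zero, ← map_sub, ← hD]
  exact seqEval_mul_X_pow_add_X_pow (fun r hr => gammaSeq_add_of_le (periodic_cshiftSeq x i) hr) D

lemma exists_phiMap_eq_mul {n : ℕ} (hn : 2 ≤ n) {a b : ℕ → ZMod 2} (ha : a 0 = 1) (hb : b 0 = 1) :
    ∃ c : ℕ → ZMod 2, c 0 = 1 ∧ phiMap n c = phiMap n a * phiMap n b := by
  set f : (ZMod 2)[X] := X ^ n + X ^ (n / 2)
  have hf : f.Monic := monic_X_pow_add (by rw [degree_X_pow]; exact_mod_cast (by omega : n / 2 < n))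
  have hfn : f.natDegree = n := by
    rw [natDegree_add_eq_left_of_natDegree_lt (by simp only [natDegree_X_pow]; omega),
      natDegree_X_pow]
  have hf0 : f.coeff 0 = 0 := by
    rw [coeff_add, coeff_X_pow, coeff_X_pow, if_neg (by omega), if_neg (by omega), add_zero]
  refine ⟨((truncPoly n a * truncPoly n b) %ₘ f).coeff, ?_, ?_⟩
  · rw [modByMonic_eq_sub_mul_div, coeff_sub, mul_coeff_zero, mul_coeff_zero, hf0,
      coeff_truncPoly_zero (by omega), coeff_truncPoly_zero (by omega), ha, hb]
    simp
  · have hP := natDegree_modByMonic_lt (truncPoly n a * truncPoly n b) hf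
      (fun h1 => by rw [h1, natDegree_one] at hfn; omega)
    rw [hfn] at hP
    change Ideal.Quotient.mk _ (truncPoly n _) = Ideal.Quotient.mk _ (truncPoly n a * truncPoly n b)
    rw [truncPoly_coeff hP, Ideal.Quotient.eq, Ideal.mem_span_singleton, modByMonic_eq_sub_mul_div,
      sub_sub_cancel_left]
    exact (dvd_mul_right _ _).neg_right

theorem stmt_8 (n : ℕ) (hn : Even n) (hn2 : 2 ≤ n) :
    (∀ a b : ℕ → ZMod 2, a 0 = 1 → b 0 = 1 →
      ∃ c : ℕ → ZMod 2, c 0 = 1 ∧ gammaFun n a ∘ gammaFun n b = gammaFun n c ∧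
        phiMap n c = phiMap n a * phiMap n b) ∧
    (∀ a b : ℕ → ZMod 2, a 0 = 1 → b 0 = 1 →
      (phiMap n a = phiMap n b ↔ gammaFun n a = gammaFun n b)) ∧
    gammaFun n (fun i => if i = 0 then 1 else 0) = id ∧
    phiMap n (fun i => if i = 0 then 1 else 0) = 1 := by
  have hn0 : 0 < n := by omega
  refine ⟨fun a b ha hb => ?_, fun a b _ _ => ⟨fun hab => ?_, fun hab => ?_⟩, ?_, ?_⟩
  · obtain ⟨c, hc0, hc⟩ := exists_phiMap_eq_mul hn2 ha hb
    refine ⟨c, hc0, funext fun x => funext fun i => ?_, hc⟩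
    rw [Function.comp_apply, gammaFun_gammaFun_apply hn0 hb, gammaFun_apply_eq_seqEval]
    exact (seqEval_gammaSeq_eq_of_mk_eq hn x i (hc.trans (map_mul _ _ _).symm)).symm
  · funext x i
    rw [gammaFun_apply_eq_seqEval, gammaFun_apply_eq_seqEval]
    exact seqEval_gammaSeq_eq_of_mk_eq hn x i hab
  · have hab := eq_of_gammaFun_eq hn hab
    exact congrArg (Ideal.Quotient.mk _) (sum_congr rfl fun k hk => by rw [hab k (mem_range.1 hk)])
  · funext x i
    simp [gammaFun_apply_eq_sum, hn0, gammaSeq_zero, cshiftSeq]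
  · simp [phiMap, hn0]
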